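/- arXiv:2403.20151 — 5 statements merged into one kernel-verified Lean document; each statement's English description precedes it below -/
import Mathlib

section
/- McAfee's trade-reduction allocation achieves at least a (K−1)/K fraction of the maximum gains from trade: ∑_{k=1}^{K−1} (b_k − a_k) ≥ ((K−1)/K) · ∑_{k=1}^{K} (b_k − a_k), where K ≥ 1 is the breakeven index. -/
open Finset

/-- McAfee's trade-reduction allocation achieves at least a
`(K−1)/K` fraction of the maximum gains from trade:
`∑_{k=1}^{K−1} (b k − a k) ≥ ((K−1)/K) · ∑_{k=1}^{K} (b k − a k)`,
where `K ≥ 1` is the breakeven index (so `b k ≥ a k` for all `k ≤ K`). -/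
theorem stmt_10 (V M K : ℕ) (b a : ℕ → ℝ)
    (hb : AntitoneOn b (Set.Icc 1 V)) (ha : MonotoneOn a (Set.Icc 1 M))
    (hK1 : 1 ≤ K) (hKV : K ≤ V) (hKM : K ≤ M)
    (hle : ∀ k, 1 ≤ k → k ≤ K → a k ≤ b k) :
    ((K : ℝ) - 1) / (K : ℝ) * ∑ k ∈ Finset.Icc 1 K, (b k - a k) ≤
      ∑ k ∈ Finset.Icc 1 (K - 1), (b k - a k) := by
  obtain ⟨K', rfl⟩ : ∃ K', K = K' + 1 := ⟨K - 1, (Nat.succ_pred_eq_of_pos hK1).symm⟩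
  have hsplit : ∑ k ∈ Finset.Icc 1 (K' + 1), (b k - a k)
      = ∑ k ∈ Finset.Icc 1 K', (b k - a k) + (b (K' + 1) - a (K' + 1)) :=
    Finset.sum_Icc_succ_top (by omega) _
  have hkey : ((K' : ℝ) + 1) * (b (K' + 1) - a (K' + 1))
      ≤ ∑ k ∈ Finset.Icc 1 (K' + 1), (b k - a k) := by
    have := Finset.card_nsmul_le_sum (Finset.Icc 1 (K' + 1))
      (fun k => b k - a k) (b (K' + 1) - a (K' + 1)) ?_
    · simpa [Nat.card_Icc, nsmul_eq_mul, add_comm] using this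
    · intro i hi
      simp only [Finset.mem_Icc] at hi
      have hb' : b (K' + 1) ≤ b i := hb ⟨hi.1, le_trans hi.2 hKV⟩ ⟨by omega, hKV⟩ hi.2
      have ha' : a i ≤ a (K' + 1) := ha ⟨hi.1, le_trans hi.2 hKM⟩ ⟨by omega, hKM⟩ hi.2
      show b (K' + 1) - a (K' + 1) ≤ b i - a i
      linarith
  have hc : (0 : ℝ) < (K' : ℝ) + 1 := by positivity
  simp only [Nat.add_sub_cancel, Nat.cast_add, Nat.cast_one] at *
  rw [hsplit] at *
  rw [div_mul_eq_mul_div, div_le_iff₀ hc]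
  nlinarith [hkey]
end

section
/- McAfee's double auction is dominant-strategy truthful for buyers: for every buyer with true valuation u, every fixed profile of the other buyers' bids and all sellers' asks, and every alternative bid b′, the buyer's utility (value minus payment if she trades, 0 otherwise) under the McAfee outcome when she reports u is at least her utility under the McAfee outcome when she reports b′. -/
open Classical Finset

/-- The `k`-th highest bid (1-indexed) of an arbitrary bid profile `b`,
obtained by sorting `b` in descending order with Mathlib's fixed
tie-breaking order (`0` out of range). -/
noncomputable def nthBidDesc {n : ℕ} (b : Fin n → ℝ) (k : ℕ) : ℝ :=
  if h : k - 1 < n then b (Tuple.sort (fun i => -b i) ⟨k - 1, h⟩) else 0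

/-- The `k`-th lowest ask (1-indexed) of an arbitrary ask profile `a`,
obtained by sorting `a` in ascending order with Mathlib's fixed
tie-breaking order (`0` out of range). -/
noncomputable def nthAskAsc {n : ℕ} (a : Fin n → ℝ) (k : ℕ) : ℝ :=
  if h : k - 1 < n then a (Tuple.sort a ⟨k - 1, h⟩) else 0

/-- The breakeven index: the largest `k ∈ {1, …, min V M}` such that the
`k`-th highest bid is at least the `k`-th lowest ask (`0` if none). -/
noncomputable def mcafeeK (V M : ℕ) (b : Fin V → ℝ) (a : Fin M → ℝ) : ℕ :=
  ((Finset.Icc 1 (min V M)).filter (fun k => nthAskAsc a k ≤ nthBidDesc b k)).sup id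

/-- The McAfee candidate price `p₀ = (b_{K+1} + a_{K+1})/2`. -/
noncomputable def mcafeeP0 (V M : ℕ) (b : Fin V → ℝ) (a : Fin M → ℝ) : ℝ :=
  (nthBidDesc b (mcafeeK V M b a + 1) + nthAskAsc a (mcafeeK V M b a + 1)) / 2

/-- Whether the threshold-price case of McAfee's auction applies:
`K ≥ 1`, `K < min V M` (so `p₀` is defined) and `a_K ≤ p₀ ≤ b_K`. -/
def mcafeeThreshold (V M : ℕ) (b : Fin V → ℝ) (a : Fin M → ℝ) : Prop :=
  1 ≤ mcafeeK V M b a ∧ mcafeeK V M b a + 1 ≤ min V M ∧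
    nthAskAsc a (mcafeeK V M b a) ≤ mcafeeP0 V M b a ∧
    mcafeeP0 V M b a ≤ nthBidDesc b (mcafeeK V M b a)

/-- Number of trades executed by McAfee's mechanism: `K` in the
threshold-price case, `K − 1` otherwise (trade reduction). -/
noncomputable def mcafeeQ (V M : ℕ) (b : Fin V → ℝ) (a : Fin M → ℝ) : ℕ :=
  if mcafeeThreshold V M b a then mcafeeK V M b a else mcafeeK V M b a - 1

/-- Price paid by each trading buyer: `p₀` in the threshold-price case,
`b_K` in the trade-reduction case. -/
noncomputable def mcafeeBuyerPrice (V M : ℕ) (b : Fin V → ℝ) (a : Fin M → ℝ) : ℝ :=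
  if mcafeeThreshold V M b a then mcafeeP0 V M b a
  else nthBidDesc b (mcafeeK V M b a)

/-- Price received by each trading seller: `p₀` in the threshold-price case,
`a_K` in the trade-reduction case. -/
noncomputable def mcafeeSellerPrice (V M : ℕ) (b : Fin V → ℝ) (a : Fin M → ℝ) : ℝ :=
  if mcafeeThreshold V M b a then mcafeeP0 V M b a
  else nthAskAsc a (mcafeeK V M b a)

/-- The (1-indexed) rank of buyer `i` in the descending order of bids,
using the fixed tie-breaking order of `Tuple.sort`. -/
noncomputable def buyerRank {V : ℕ} (b : Fin V → ℝ) (i : Fin V) : ℕ :=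
  ((Tuple.sort (fun j => -b j)).symm i : ℕ) + 1

/-- The (1-indexed) rank of seller `j` in the ascending order of asks,
using the fixed tie-breaking order of `Tuple.sort`. -/
noncomputable def sellerRank {M : ℕ} (a : Fin M → ℝ) (j : Fin M) : ℕ :=
  ((Tuple.sort a).symm j : ℕ) + 1

/-- Buyer `i` trades iff she is among the `q` highest-ranked buyers. -/
def buyerTrades (V M : ℕ) (b : Fin V → ℝ) (a : Fin M → ℝ) (i : Fin V) : Prop :=
  buyerRank b i ≤ mcafeeQ V M b a

/-- Seller `j` trades iff she is among the `q` lowest-ranked sellers. -/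
def sellerTrades (V M : ℕ) (b : Fin V → ℝ) (a : Fin M → ℝ) (j : Fin M) : Prop :=
  sellerRank a j ≤ mcafeeQ V M b a

/-- Utility of buyer `i` with true valuation `u` under McAfee's outcome for
the profile `(b, a)`: `u` minus the price paid if she trades, `0` otherwise. -/
noncomputable def buyerUtility (V M : ℕ) (b : Fin V → ℝ) (a : Fin M → ℝ)
    (i : Fin V) (u : ℝ) : ℝ :=
  if buyerTrades V M b a i then u - mcafeeBuyerPrice V M b a else 0

/-- Utility of seller `j` with true cost `c` under McAfee's outcome for the
profile `(b, a)`: payment received minus `c` if she trades, `0` otherwise. -/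
noncomputable def sellerUtility (V M : ℕ) (b : Fin V → ℝ) (a : Fin M → ℝ)
    (j : Fin M) (c : ℝ) : ℝ :=
  if sellerTrades V M b a j then mcafeeSellerPrice V M b a - c else 0

namespace McAfeeAux
open Finset

variable {V M : ℕ}

noncomputable def cge (b : Fin V → ℝ) (t : ℝ) : ℕ :=
  (Finset.univ.filter fun j => t ≤ b j).card

noncomputable def cgt (b : Fin V → ℝ) (t : ℝ) : ℕ :=
  (Finset.univ.filter fun j => t < b j).card

noncomputable def oge (b : Fin V → ℝ) (i : Fin V) (t : ℝ) : ℕ :=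
  ((Finset.univ.erase i).filter fun j => t ≤ b j).card

noncomputable def ogt (b : Fin V → ℝ) (i : Fin V) (t : ℝ) : ℕ :=
  ((Finset.univ.erase i).filter fun j => t < b j).card

lemma ogt_le_oge (b : Fin V → ℝ) (i : Fin V) (t : ℝ) : ogt b i t ≤ oge b i t := by
  apply Finset.card_le_card
  intro j hj
  simp only [Finset.mem_filter] at *
  exact ⟨hj.1, le_of_lt hj.2⟩

lemma oge_le_ogt_of_lt (b : Fin V → ℝ) (i : Fin V) {s t : ℝ} (h : s < t) :
    oge b i t ≤ ogt b i s := by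
  apply Finset.card_le_card
  intro j hj
  simp only [Finset.mem_filter] at *
  exact ⟨hj.1, lt_of_lt_of_le h hj.2⟩

lemma cge_update (b : Fin V → ℝ) (i : Fin V) (x t : ℝ) :
    cge (Function.update b i x) t = oge b i t + if t ≤ x then 1 else 0 := by
  unfold cge oge
  have h1 : (Finset.univ : Finset (Fin V)) = insert i (Finset.univ.erase i) := by
    rw [Finset.insert_erase (Finset.mem_univ i)]
  have h2 : (Finset.univ.erase i).filter (fun j => t ≤ Function.update b i x j)
      = (Finset.univ.erase i).filter (fun j => t ≤ b j) :=
    Finset.filter_congr (fun j hj => by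
      rw [Function.update_of_ne (Finset.ne_of_mem_erase hj)])
  conv_lhs => rw [h1]
  rw [Finset.filter_insert, Function.update_self, h2]
  by_cases hx : t ≤ x
  · rw [if_pos hx, if_pos hx, Finset.card_insert_of_notMem (by simp)]
  · rw [if_neg hx, if_neg hx]
    omega

lemma cgt_update (b : Fin V → ℝ) (i : Fin V) (x t : ℝ) :
    cgt (Function.update b i x) t = ogt b i t + if t < x then 1 else 0 := by
  unfold cgt ogt
  have h1 : (Finset.univ : Finset (Fin V)) = insert i (Finset.univ.erase i) := by
    rw [Finset.insert_erase (Finset.mem_univ i)]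
  have h2 : (Finset.univ.erase i).filter (fun j => t < Function.update b i x j)
      = (Finset.univ.erase i).filter (fun j => t < b j) :=
    Finset.filter_congr (fun j hj => by
      rw [Function.update_of_ne (Finset.ne_of_mem_erase hj)])
  conv_lhs => rw [h1]
  rw [Finset.filter_insert, Function.update_self, h2]
  by_cases hx : t < x
  · rw [if_pos hx, if_pos hx, Finset.card_insert_of_notMem (by simp)]
  · rw [if_neg hx, if_neg hx]
    omega

lemma nth_def (b : Fin V → ℝ) {k : ℕ} (h1 : 1 ≤ k) (h2 : k ≤ V) :
    nthBidDesc b k = b (Tuple.sort (fun j => -b j) ⟨k - 1, by omega⟩) := by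
  unfold nthBidDesc
  rw [dif_pos (by omega : k - 1 < V)]

lemma nth_anti (b : Fin V → ℝ) {k l : ℕ} (h1 : 1 ≤ k) (hkl : k ≤ l) (h2 : l ≤ V) :
    nthBidDesc b l ≤ nthBidDesc b k := by
  rw [nth_def b h1 (le_trans hkl h2), nth_def b (le_trans h1 hkl) h2]
  have hm := Tuple.monotone_sort (fun j => -b j)
    (a := ⟨k - 1, by omega⟩) (b := ⟨l - 1, by omega⟩) (by simp only [Fin.mk_le_mk]; omega)
  simp only [Function.comp_apply] at hm
  linarith

lemma rank_pos (b : Fin V → ℝ) (i : Fin V) : 1 ≤ buyerRank b i := by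
  unfold buyerRank; omega

lemma rank_le (b : Fin V → ℝ) (i : Fin V) : buyerRank b i ≤ V := by
  unfold buyerRank
  have := ((Tuple.sort (fun j => -b j)).symm i).isLt
  omega

lemma nth_rank (b : Fin V → ℝ) (i : Fin V) : nthBidDesc b (buyerRank b i) = b i := by
  unfold nthBidDesc buyerRank
  rw [dif_pos (by simp only [Nat.add_sub_cancel]; exact ((Tuple.sort (fun j => -b j)).symm i).isLt)]
  simp

end McAfeeAux
namespace McAfeeAux
open Finset

variable {V M : ℕ}

lemma le_nth_iff (b : Fin V → ℝ) {k : ℕ} (t : ℝ) (h1 : 1 ≤ k) (h2 : k ≤ V) :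
    t ≤ nthBidDesc b k ↔ k ≤ cge b t := by
  constructor
  · intro h
    rw [nth_def b h1 h2] at h
    have hinj : Function.Injective
        (fun m : Fin k => Tuple.sort (fun j => -b j) (Fin.castLE h2 m)) := by
      intro m1 m2 hm
      have := (Tuple.sort (fun j => -b j)).injective hm
      exact Fin.castLE_injective h2 this
    have hsub : (Finset.univ.image
        fun m : Fin k => Tuple.sort (fun j => -b j) (Fin.castLE h2 m))
        ⊆ Finset.univ.filter (fun j => t ≤ b j) := by
      intro j hj
      simp only [Finset.mem_image, Finset.mem_univ, true_and] at hj
      obtain ⟨m, rfl⟩ := hj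
      have hle : (Fin.castLE h2 m) ≤ (⟨k - 1, by omega⟩ : Fin V) := by
        simp only [Fin.le_def, Fin.coe_castLE]
        have := m.isLt
        omega
      have hm := Tuple.monotone_sort (fun j => -b j) hle
      simp only [Function.comp_apply] at hm
      simp only [Finset.mem_filter, Finset.mem_univ, true_and]
      linarith
    calc k = Fintype.card (Fin k) := (Fintype.card_fin k).symm
    _ = (Finset.univ.image
        fun m : Fin k => Tuple.sort (fun j => -b j) (Fin.castLE h2 m)).card := by
        rw [Finset.card_image_of_injective _ hinj, Finset.card_univ]
    _ ≤ cge b t := Finset.card_le_card hsub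
  · intro h
    by_contra hcon
    push_neg at hcon
    rw [nth_def b h1 h2] at hcon
    have hsub : ∀ j ∈ Finset.univ.filter (fun j => t ≤ b j),
        (((Tuple.sort (fun j => -b j)).symm j : ℕ)) ∈ Finset.range (k - 1) := by
      intro j hj
      simp only [Finset.mem_filter, Finset.mem_univ, true_and] at hj
      simp only [Finset.mem_range]
      by_contra hge
      push_neg at hge
      have hle : (⟨k - 1, by omega⟩ : Fin V) ≤ (Tuple.sort (fun j => -b j)).symm j := by
        simp only [Fin.le_def]
        exact hge
      have hm := Tuple.monotone_sort (fun j => -b j) hle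
      simp only [Function.comp_apply, Equiv.apply_symm_apply] at hm
      linarith
    have hinj : Set.InjOn (fun j => (((Tuple.sort (fun j => -b j)).symm j : ℕ)))
        (Finset.univ.filter (fun j => t ≤ b j)) := by
      intro j1 _ j2 _ hj
      have : (Tuple.sort (fun j => -b j)).symm j1 = (Tuple.sort (fun j => -b j)).symm j2 :=
        Fin.ext hj
      exact (Tuple.sort (fun j => -b j)).symm.injective this
    have := Finset.card_le_card_of_injOn _ hsub hinj
    rw [Finset.card_range] at this
    unfold cge at h
    omega

lemma lt_nth_iff (b : Fin V → ℝ) {k : ℕ} (t : ℝ) (h1 : 1 ≤ k) (h2 : k ≤ V) :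
    t < nthBidDesc b k ↔ k ≤ cgt b t := by
  constructor
  · intro h
    rw [nth_def b h1 h2] at h
    have hinj : Function.Injective
        (fun m : Fin k => Tuple.sort (fun j => -b j) (Fin.castLE h2 m)) := by
      intro m1 m2 hm
      have := (Tuple.sort (fun j => -b j)).injective hm
      exact Fin.castLE_injective h2 this
    have hsub : (Finset.univ.image
        fun m : Fin k => Tuple.sort (fun j => -b j) (Fin.castLE h2 m))
        ⊆ Finset.univ.filter (fun j => t < b j) := by
      intro j hj
      simp only [Finset.mem_image, Finset.mem_univ, true_and] at hj
      obtain ⟨m, rfl⟩ := hj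
      have hle : (Fin.castLE h2 m) ≤ (⟨k - 1, by omega⟩ : Fin V) := by
        simp only [Fin.le_def, Fin.coe_castLE]
        have := m.isLt
        omega
      have hm := Tuple.monotone_sort (fun j => -b j) hle
      simp only [Function.comp_apply] at hm
      simp only [Finset.mem_filter, Finset.mem_univ, true_and]
      linarith
    calc k = Fintype.card (Fin k) := (Fintype.card_fin k).symm
    _ = (Finset.univ.image
        fun m : Fin k => Tuple.sort (fun j => -b j) (Fin.castLE h2 m)).card := by
        rw [Finset.card_image_of_injective _ hinj, Finset.card_univ]
    _ ≤ cgt b t := Finset.card_le_card hsub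
  · intro h
    by_contra hcon
    push_neg at hcon
    rw [nth_def b h1 h2] at hcon
    have hsub : ∀ j ∈ Finset.univ.filter (fun j => t < b j),
        (((Tuple.sort (fun j => -b j)).symm j : ℕ)) ∈ Finset.range (k - 1) := by
      intro j hj
      simp only [Finset.mem_filter, Finset.mem_univ, true_and] at hj
      simp only [Finset.mem_range]
      by_contra hge
      push_neg at hge
      have hle : (⟨k - 1, by omega⟩ : Fin V) ≤ (Tuple.sort (fun j => -b j)).symm j := by
        simp only [Fin.le_def]
        exact hge
      have hm := Tuple.monotone_sort (fun j => -b j) hle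
      simp only [Function.comp_apply, Equiv.apply_symm_apply] at hm
      linarith
    have hinj : Set.InjOn (fun j => (((Tuple.sort (fun j => -b j)).symm j : ℕ)))
        (Finset.univ.filter (fun j => t < b j)) := by
      intro j1 _ j2 _ hj
      have : (Tuple.sort (fun j => -b j)).symm j1 = (Tuple.sort (fun j => -b j)).symm j2 :=
        Fin.ext hj
      exact (Tuple.sort (fun j => -b j)).symm.injective this
    have := Finset.card_le_card_of_injOn _ hsub hinj
    rw [Finset.card_range] at this
    unfold cgt at h
    omega

lemma rank_le_cge (b : Fin V → ℝ) (i : Fin V) : buyerRank b i ≤ cge b (b i) := by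
  have h := (le_nth_iff b (b i) (rank_pos b i) (rank_le b i)).mp (by rw [nth_rank])
  exact h

lemma cgt_lt_rank (b : Fin V → ℝ) (i : Fin V) : cgt b (b i) < buyerRank b i := by
  by_contra h
  push_neg at h
  have := (lt_nth_iff b (b i) (rank_pos b i) (rank_le b i)).mpr h
  rw [nth_rank] at this
  exact lt_irrefl _ this

end McAfeeAux
namespace McAfeeAux
open Finset

variable {V M : ℕ}

lemma nth_update_le (b : Fin V → ℝ) (i : Fin V) (x y : ℝ) {k : ℕ} (hk : k ≤ V)
    (hx : ogt b i x + 2 ≤ k) (hy : ogt b i y + 2 ≤ k) :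
    nthBidDesc (Function.update b i x) k ≤ nthBidDesc (Function.update b i y) k := by
  by_contra hcon
  push_neg at hcon
  set t := nthBidDesc (Function.update b i y) k with ht
  have h1k : 1 ≤ k := by omega
  have h1 : k ≤ cgt (Function.update b i x) t :=
    (lt_nth_iff _ t h1k hk).mp hcon
  rw [cgt_update] at h1
  have h2 : ¬ k ≤ cgt (Function.update b i y) t := by
    intro hh
    exact lt_irrefl t ((lt_nth_iff _ t h1k hk).mpr hh)
  rw [cgt_update] at h2
  by_cases htx : t < x
  · rw [if_pos htx] at h1
    by_cases hty : t < y
    · rw [if_pos hty] at h2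
      omega
    · push_neg at hty
      rcases eq_or_lt_of_le hty with heq | hlt
      · -- y = t
        rw [heq] at hy
        omega
      · -- y < t
        have h3 : k ≤ cge (Function.update b i y) t :=
          (le_nth_iff _ t h1k hk).mp (le_of_eq ht)
        rw [cge_update, if_neg (not_le.mpr hlt)] at h3
        have h4 : oge b i t ≤ ogt b i y := oge_le_ogt_of_lt b i hlt
        omega
  · rw [if_neg htx] at h1
    omega

lemma nth_update_eq (b : Fin V → ℝ) (i : Fin V) (x y : ℝ) {k : ℕ} (hk : k ≤ V)
    (hx : ogt b i x + 2 ≤ k) (hy : ogt b i y + 2 ≤ k) :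
    nthBidDesc (Function.update b i x) k = nthBidDesc (Function.update b i y) k :=
  le_antisymm (nth_update_le b i x y hk hx hy) (nth_update_le b i y x hk hy hx)

lemma K_le_min (V M : ℕ) (b : Fin V → ℝ) (a : Fin M → ℝ) :
    mcafeeK V M b a ≤ min V M := by
  unfold mcafeeK
  apply Finset.sup_le
  intro k hk
  simp only [Finset.mem_filter, Finset.mem_Icc] at hk
  exact hk.1.2

lemma K_spec (b : Fin V → ℝ) (a : Fin M → ℝ) (h : 1 ≤ mcafeeK V M b a) :
    1 ≤ mcafeeK V M b a ∧ mcafeeK V M b a ≤ min V M ∧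
      nthAskAsc a (mcafeeK V M b a) ≤ nthBidDesc b (mcafeeK V M b a) := by
  have hne : ((Finset.Icc 1 (min V M)).filter
      (fun k => nthAskAsc a k ≤ nthBidDesc b k)).Nonempty := by
    by_contra hne
    rw [Finset.not_nonempty_iff_eq_empty] at hne
    unfold mcafeeK at h
    rw [hne] at h
    simp at h
  obtain ⟨k, hk, hke⟩ := Finset.exists_mem_eq_sup _ hne id
  have hkK : mcafeeK V M b a = k := hke
  rw [hkK]
  simp only [Finset.mem_filter, Finset.mem_Icc] at hk
  exact ⟨hk.1.1, hk.1.2, hk.2⟩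

lemma le_K {k : ℕ} (b : Fin V → ℝ) (a : Fin M → ℝ) (h1 : 1 ≤ k) (h2 : k ≤ min V M)
    (hA : nthAskAsc a k ≤ nthBidDesc b k) : k ≤ mcafeeK V M b a := by
  unfold mcafeeK
  exact Finset.le_sup (f := id)
    (Finset.mem_filter.mpr ⟨Finset.mem_Icc.mpr ⟨h1, h2⟩, hA⟩)

lemma price_le_bid (V M : ℕ) (b : Fin V → ℝ) (a : Fin M → ℝ) (i : Fin V)
    (h : buyerTrades V M b a i) : mcafeeBuyerPrice V M b a ≤ b i := by
  unfold buyerTrades mcafeeQ at h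
  unfold mcafeeBuyerPrice
  by_cases hth : mcafeeThreshold V M b a
  · rw [if_pos hth] at h ⊢
    obtain ⟨hK1, hK1', hKa, hKb⟩ := hth
    have hKV : mcafeeK V M b a ≤ V := by
      have := hK1'
      omega
    calc mcafeeP0 V M b a ≤ nthBidDesc b (mcafeeK V M b a) := hKb
    _ ≤ nthBidDesc b (buyerRank b i) := nth_anti b (rank_pos b i) h hKV
    _ = b i := nth_rank b i
  · rw [if_neg hth] at h ⊢
    have hr1 := rank_pos b i
    have hK2 : 2 ≤ mcafeeK V M b a := by omega
    have hKV : mcafeeK V M b a ≤ V := by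
      have := K_le_min V M b a
      omega
    calc nthBidDesc b (mcafeeK V M b a) ≤ nthBidDesc b (buyerRank b i) :=
      nth_anti b (rank_pos b i) (by omega) hKV
    _ = b i := nth_rank b i

end McAfeeAux
namespace McAfeeAux
open Finset

variable {V M : ℕ}

lemma key (V M : ℕ) (b : Fin V → ℝ) (a : Fin M → ℝ) (i : Fin V) (x y : ℝ)
    (hy : buyerTrades V M (Function.update b i y) a i)
    (hx : mcafeeBuyerPrice V M (Function.update b i y) a < x) :
    buyerTrades V M (Function.update b i x) a i ∧
      mcafeeBuyerPrice V M (Function.update b i x) a =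
        mcafeeBuyerPrice V M (Function.update b i y) a := by
  classical
  set c := Function.update b i x with hc
  set d := Function.update b i y with hd
  set K := mcafeeK V M d a with hKdef
  have hrd1 : 1 ≤ buyerRank d i := rank_pos d i
  have hrdV : buyerRank d i ≤ V := rank_le d i
  have hdi : d i = y := Function.update_self i y b
  have hci : c i = x := Function.update_self i x b
  have hogty : ogt b i y < buyerRank d i := by
    have h1 := cgt_lt_rank d i
    have h2 : cgt d (d i) = ogt b i y := by
      rw [hdi, hd, cgt_update, if_neg (lt_irrefl y)]
      omega
    omega
  have hrcge : buyerRank c i ≤ oge b i x + 1 := by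
    have h1 := rank_le_cge c i
    have h2 : cge c (c i) = oge b i x + 1 := by
      rw [hci, hc, cge_update, if_pos (le_refl x)]
    omega
  unfold buyerTrades mcafeeQ at hy
  unfold mcafeeBuyerPrice at hx
  rw [← hKdef] at hy hx
  by_cases hth : mcafeeThreshold V M d a
  · -- threshold case
    rw [if_pos hth] at hy hx
    have hK1 : 1 ≤ K := hKdef ▸ hth.1
    have hK1' : K + 1 ≤ min V M := hKdef ▸ hth.2.1
    have hKa : nthAskAsc a K ≤ mcafeeP0 V M d a := hKdef ▸ hth.2.2.1
    have hKb : mcafeeP0 V M d a ≤ nthBidDesc d K := hKdef ▸ hth.2.2.2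
    set p := mcafeeP0 V M d a with hpdef
    have hKV : K ≤ V := by omega
    have hK1V : K + 1 ≤ V := by omega
    have hyp : p ≤ y := by
      calc p ≤ nthBidDesc d K := hKb
      _ ≤ nthBidDesc d (buyerRank d i) := nth_anti d hrd1 hy hKV
      _ = y := by rw [nth_rank, hdi]
    have hA1 : nthBidDesc d (K + 1) < nthAskAsc a (K + 1) := by
      by_contra hcon
      push_neg at hcon
      have := le_K d a (by omega) hK1' hcon
      omega
    have hBp : nthBidDesc d (K + 1) < p := by
      have hpexp : p = (nthBidDesc d (K + 1) + nthAskAsc a (K + 1)) / 2 := by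
        rw [hpdef]
        unfold mcafeeP0
        rw [← hKdef]
      rw [hpexp]
      linarith
    set t := nthBidDesc d (K + 1) with htdef
    have hyt : t < y := lt_of_lt_of_le hBp hyp
    have hxt : t < x := lt_trans hBp hx
    have hcgt : cgt d t ≤ K := by
      by_contra hcon
      push_neg at hcon
      have := (lt_nth_iff d t (by omega) hK1V).mpr hcon
      rw [← htdef] at this
      exact lt_irrefl t this
    have hogtt : ogt b i t + 1 ≤ K := by
      have h2 : cgt d t = ogt b i t + 1 := by
        rw [hd, cgt_update, if_pos hyt]
      omega
    have hogex : oge b i x + 1 ≤ K :=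
      le_trans (Nat.add_le_add_right (oge_le_ogt_of_lt b i hxt) 1) hogtt
    have hogtx : ogt b i x + 1 ≤ K :=
      le_trans (Nat.add_le_add_right (ogt_le_oge b i x) 1) hogex
    have hogty' : ogt b i y + 1 ≤ K := by omega
    have hrc : buyerRank c i ≤ K := by omega
    have hsame : ∀ k, K + 1 ≤ k → k ≤ V →
        nthBidDesc c k = nthBidDesc d k := by
      intro k h1 h2
      rw [hc, hd]
      exact nth_update_eq b i x y h2 (by omega) (by omega)
    have hpBc : p ≤ nthBidDesc c K := by
      rw [le_nth_iff c p hK1 hKV]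
      have h1 : K ≤ cge d p := (le_nth_iff d p hK1 hKV).mp hKb
      have h2 : cge d p = oge b i p + 1 := by
        rw [hd, cge_update, if_pos hyp]
      have h3 : cge c p = oge b i p + 1 := by
        rw [hc, cge_update, if_pos (le_of_lt hx)]
      omega
    have hKc : mcafeeK V M c a = K := by
      apply le_antisymm
      · unfold mcafeeK
        apply Finset.sup_le
        intro k hk
        simp only [Finset.mem_filter, Finset.mem_Icc] at hk
        show k ≤ K
        by_contra hcon
        push_neg at hcon
        have hkV : k ≤ V := by omega
        have h5 := hk.2
        rw [hsame k (by omega) hkV] at h5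
        have := le_K d a hk.1.1 hk.1.2 h5
        omega
      · exact le_K c a hK1 (by omega) (le_trans hKa hpBc)
    have hp0c : mcafeeP0 V M c a = p := by
      unfold mcafeeP0
      rw [hKc, hsame (K + 1) (le_refl _) hK1V, hpdef]
      unfold mcafeeP0
      rw [← hKdef]
    have hthc : mcafeeThreshold V M c a := by
      unfold mcafeeThreshold
      rw [hKc, hp0c]
      exact ⟨hK1, hK1', hKa, hpBc⟩
    constructor
    · unfold buyerTrades mcafeeQ
      rw [if_pos hthc, hKc]
      exact hrc
    · unfold mcafeeBuyerPrice
      rw [if_pos hthc, if_pos hth, hp0c]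
  · -- trade reduction case
    rw [if_neg hth] at hy hx
    have hK2 : 2 ≤ K := by omega
    have hKs := K_spec d a (by omega)
    rw [← hKdef] at hKs
    have hKmin : K ≤ min V M := hKs.2.1
    have hAK : nthAskAsc a K ≤ nthBidDesc d K := hKs.2.2
    have hKV : K ≤ V := by omega
    set t := nthBidDesc d K with htdef
    have hyt : t ≤ y := by
      calc t ≤ nthBidDesc d (buyerRank d i) := nth_anti d hrd1 (by omega) hKV
      _ = y := by rw [nth_rank, hdi]
    have hcgt : cgt d t < K := by
      by_contra hcon
      push_neg at hcon
      have := (lt_nth_iff d t (by omega) hKV).mpr hcon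
      rw [← htdef] at this
      exact lt_irrefl t this
    have hogty2 : ogt b i y + 2 ≤ K := by omega
    have hogex : oge b i x + 2 ≤ K := by
      rcases lt_or_eq_of_le hyt with hlt | heq
      · have h2 : cgt d t = ogt b i t + 1 := by
          rw [hd, cgt_update, if_pos hlt]
        have h3 : oge b i x ≤ ogt b i t := oge_le_ogt_of_lt b i hx
        omega
      · have h3 : oge b i x ≤ ogt b i y := by
          apply oge_le_ogt_of_lt
          rw [← heq]
          exact hx
        omega
    have hogtx : ogt b i x + 2 ≤ K :=
      le_trans (Nat.add_le_add_right (ogt_le_oge b i x) 2) hogex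
    have hrc : buyerRank c i ≤ K - 1 := by omega
    have hsame : ∀ k, K ≤ k → k ≤ V →
        nthBidDesc c k = nthBidDesc d k := by
      intro k h1 h2
      rw [hc, hd]
      exact nth_update_eq b i x y h2 (by omega) (by omega)
    have hBK : nthBidDesc c K = nthBidDesc d K := hsame K (le_refl _) hKV
    have hBK1 : nthBidDesc c (K + 1) = nthBidDesc d (K + 1) := by
      by_cases hKV1 : K + 1 ≤ V
      · exact hsame (K + 1) (by omega) hKV1
      · unfold nthBidDesc
        rw [dif_neg (by omega), dif_neg (by omega)]
    have hKc : mcafeeK V M c a = K := by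
      apply le_antisymm
      · unfold mcafeeK
        apply Finset.sup_le
        intro k hk
        simp only [Finset.mem_filter, Finset.mem_Icc] at hk
        show k ≤ K
        by_contra hcon
        push_neg at hcon
        have hkV : k ≤ V := by omega
        have h5 := hk.2
        rw [hsame k (by omega) hkV] at h5
        have := le_K d a hk.1.1 hk.1.2 h5
        omega
      · exact le_K c a (by omega) hKmin (by rw [hBK]; exact hAK)
    have hiff : mcafeeThreshold V M c a ↔ mcafeeThreshold V M d a := by
      unfold mcafeeThreshold mcafeeP0
      rw [hKc, ← hKdef, hBK1, hBK]
    have hthc : ¬ mcafeeThreshold V M c a := fun h => hth (hiff.mp h)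
    constructor
    · unfold buyerTrades mcafeeQ
      rw [if_neg hthc, hKc]
      exact hrc
    · unfold mcafeeBuyerPrice
      rw [if_neg hthc, if_neg hth, hKc, ← hKdef, hBK]

end McAfeeAux
/-- McAfee's double auction is dominant-strategy truthful for
buyers: for every buyer `i` with true valuation `u`, every fixed profile of
the other buyers' bids (encoded in `b`) and all sellers' asks `a`, and every
alternative bid `b'`, the buyer's utility when she reports her true value `u`
is at least her utility when she reports `b'`. -/
theorem stmt_12 (V M : ℕ) (b : Fin V → ℝ) (a : Fin M → ℝ) (i : Fin V)
    (u b' : ℝ) :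
    buyerUtility V M (Function.update b i b') a i u ≤
      buyerUtility V M (Function.update b i u) a i u := by

  classical
  have hcu : Function.update b i u i = u := Function.update_self i u b
  have hdb : Function.update b i b' i = b' := Function.update_self i b' b
  by_cases hd : buyerTrades V M (Function.update b i b') a i
  · by_cases hc : buyerTrades V M (Function.update b i u) a i
    · have h1 : mcafeeBuyerPrice V M (Function.update b i u) a ≤ u := by
        have := McAfeeAux.price_le_bid V M (Function.update b i u) a i hc
        rwa [hcu] at this
      have h2 : mcafeeBuyerPrice V M (Function.update b i b') a ≤ b' := by
        have := McAfeeAux.price_le_bid V M (Function.update b i b') a i hd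
        rwa [hdb] at this
      have hpe : mcafeeBuyerPrice V M (Function.update b i u) a =
          mcafeeBuyerPrice V M (Function.update b i b') a := by
        by_cases hu : mcafeeBuyerPrice V M (Function.update b i b') a < u
        · exact (McAfeeAux.key V M b a i u b' hd hu).2
        · by_cases hb : mcafeeBuyerPrice V M (Function.update b i u) a < b'
          · exact ((McAfeeAux.key V M b a i b' u hc hb).2).symm
          · push_neg at hu hb
            linarith
      unfold buyerUtility
      rw [if_pos hc, if_pos hd, hpe]
    · have hle : u ≤ mcafeeBuyerPrice V M (Function.update b i b') a := by
        by_contra hcon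
        push_neg at hcon
        exact hc (McAfeeAux.key V M b a i u b' hd hcon).1
      unfold buyerUtility
      rw [if_neg hc, if_pos hd]
      linarith
  · unfold buyerUtility
    rw [if_neg hd]
    by_cases hc : buyerTrades V M (Function.update b i u) a i
    · rw [if_pos hc]
      have := McAfeeAux.price_le_bid V M (Function.update b i u) a i hc
      rw [hcu] at this
      linarith
    · rw [if_neg hc]
end

section
/- McAfee's double auction is dominant-strategy truthful for sellers: for every seller with true cost c, every fixed profile of all buyers' bids and the other sellers' asks, and every alternative ask a′, the seller's utility (payment minus cost if she trades, 0 otherwise) under the McAfee outcome when she reports c is at least her utility under the McAfee outcome when she reports a′. -/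
open Classical Finset

/-!
Write `f_z` for the ask profile in which seller `j` asks `z`. The order statistics `a_k` of `f_z`
with `k` above her rank depend only on the other asks. Hence, if she trades at `f_x` with
payment `p`, then at any ask `y < p` the breakeven index `K`, the price `p₀` and the case of the
mechanism are unchanged, so she still trades and is paid `p`. Since a trading seller is paid at
least her ask, reporting the true cost `c` is optimal: either it trades at the same payment as
`a'`, or the payment at `a'` is at most `c`.
-/

section OrderStatistics

variable {M : ℕ} (f : Fin M → ℝ)

theorem nthAskAsc_le_iff {k : ℕ} (hk : 1 ≤ k) (hkM : k ≤ M) (t : ℝ) :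
    nthAskAsc f k ≤ t ↔ k ≤ #{i | f i ≤ t} := by
  have hlt : k - 1 < M := by omega
  have hsorted := Tuple.lt_card_le_iff_apply_le_of_monotone (f := f ∘ Tuple.sort f) (a := t)
    (j := ⟨k - 1, hlt⟩) (Tuple.monotone_sort f)
  have hcard : #{m | (f ∘ Tuple.sort f) m ≤ t} = #{i | f i ≤ t} :=
    card_equiv (Tuple.sort f) (by simp)
  rw [nthAskAsc, dif_pos hlt, ← hcard, ← Function.comp_apply (f := f), ← hsorted]
  change k - 1 < _ ↔ _
  omega

theorem nthAskAsc_le_nthAskAsc {k k' : ℕ} (hk : 1 ≤ k) (hkk' : k ≤ k') (hk'M : k' ≤ M) :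
    nthAskAsc f k ≤ nthAskAsc f k' := by
  rw [nthAskAsc_le_iff f hk (hkk'.trans hk'M)]
  exact hkk'.trans ((nthAskAsc_le_iff f (hk.trans hkk') hk'M _).mp le_rfl)

theorem one_le_sellerRank (i : Fin M) : 1 ≤ sellerRank f i :=
  Nat.le_add_left 1 _

theorem sellerRank_le (i : Fin M) : sellerRank f i ≤ M :=
  ((Tuple.sort f).symm i).isLt

theorem nthAskAsc_sellerRank (i : Fin M) : nthAskAsc f (sellerRank f i) = f i := by
  simp [nthAskAsc, sellerRank]

end OrderStatistics

section Update

variable {M : ℕ} (a : Fin M → ℝ) (j : Fin M)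

noncomputable def numOtherAsksLE (t : ℝ) : ℕ :=
  #{i | i ≠ j ∧ a i ≤ t}

theorem card_update_le (z t : ℝ) :
    #{i | Function.update a j z i ≤ t} = numOtherAsksLE a j t + if z ≤ t then 1 else 0 := by
  rw [numOtherAsksLE]
  split_ifs with hz
  · rw [← card_insert_of_notMem (s := {i | i ≠ j ∧ a i ≤ t}) (a := j) (by simp)]
    congr 1; ext i; rcases eq_or_ne i j with rfl | hij <;> simp [*]
  · rw [add_zero]
    congr 1; ext i; rcases eq_or_ne i j with rfl | hij <;> simp [*]

theorem sellerRank_update_le (z : ℝ) :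
    sellerRank (Function.update a j z) j ≤ numOtherAsksLE a j z + 1 := by
  have h := (nthAskAsc_le_iff (Function.update a j z) (one_le_sellerRank _ j)
    (sellerRank_le _ j) z).mp (by rw [nthAskAsc_sellerRank, Function.update_self])
  rwa [card_update_le, if_pos le_rfl] at h

theorem nthAskAsc_update_le_iff (z t : ℝ) {k : ℕ}
    (hr : sellerRank (Function.update a j z) j < k) (hkM : k ≤ M) :
    nthAskAsc (Function.update a j z) k ≤ t ↔ k ≤ numOtherAsksLE a j t + 1 := by
  set f := Function.update a j z with hf
  have hk : 1 ≤ k := (one_le_sellerRank f j).trans hr.le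
  have hrank : nthAskAsc f (sellerRank f j) = z := by
    rw [nthAskAsc_sellerRank, hf, Function.update_self]
  rw [nthAskAsc_le_iff f hk hkM, card_update_le]
  by_cases hz : z ≤ t
  · rw [if_pos hz]
  · have hrt : ¬ sellerRank f j ≤ numOtherAsksLE a j t := by
      have h := nthAskAsc_le_iff f (one_le_sellerRank f j) (sellerRank_le f j) t
      rw [hrank, hf, card_update_le, if_neg hz, add_zero] at h
      exact fun h' => hz (h.mpr h')
    rw [if_neg hz]
    omega

theorem nthAskAsc_update_le_of_sellerRank_lt (x y : ℝ) {k : ℕ}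
    (hr : sellerRank (Function.update a j x) j < k) (hkM : k ≤ M) :
    nthAskAsc (Function.update a j x) k ≤ nthAskAsc (Function.update a j y) k := by
  have hk : 1 ≤ k := (one_le_sellerRank _ j).trans hr.le
  rw [nthAskAsc_update_le_iff a j x _ hr hkM]
  have h := (nthAskAsc_le_iff (Function.update a j y) hk hkM _).mp le_rfl
  rw [card_update_le] at h
  split_ifs at h <;> omega

theorem nthAskAsc_update_eq (x y : ℝ) {k : ℕ}
    (hrx : sellerRank (Function.update a j x) j < k)
    (hry : sellerRank (Function.update a j y) j < k) :
    nthAskAsc (Function.update a j x) k = nthAskAsc (Function.update a j y) k := by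
  by_cases hkM : k ≤ M
  · exact (nthAskAsc_update_le_of_sellerRank_lt a j x y hrx hkM).antisymm
      (nthAskAsc_update_le_of_sellerRank_lt a j y x hry hkM)
  · simp [nthAskAsc, show ¬ k - 1 < M by omega]

theorem sellerRank_update_lt_of_lt_nthAskAsc (x y : ℝ) {k : ℕ}
    (hr : sellerRank (Function.update a j x) j < k) (hkM : k ≤ M)
    (hy : y < nthAskAsc (Function.update a j x) k) :
    sellerRank (Function.update a j y) j < k := by
  have hcnt := (nthAskAsc_update_le_iff a j x y hr hkM).not.mp hy.not_ge
  have := sellerRank_update_le a j y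
  omega

theorem nthAskAsc_update_le_max (x y : ℝ) {k : ℕ} (hk : 1 ≤ k) (hkM : k ≤ M) :
    nthAskAsc (Function.update a j y) k ≤ max (nthAskAsc (Function.update a j x) k) y := by
  rw [nthAskAsc_le_iff _ hk hkM, card_update_le, if_pos (le_max_right _ _)]
  have hx := (nthAskAsc_le_iff (Function.update a j x) hk hkM _).mp (le_max_left _ y)
  rw [card_update_le] at hx
  split_ifs at hx <;> omega

end Update

section Mechanism

variable {V M : ℕ} (b : Fin V → ℝ) (f : Fin M → ℝ)

theorem mcafeeK_le_min : mcafeeK V M b f ≤ min V M :=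
  Finset.sup_le fun _ hk => (mem_Icc.mp (mem_filter.mp hk).1).2

theorem le_mcafeeK {k : ℕ} (hk : 1 ≤ k) (hkm : k ≤ min V M)
    (h : nthAskAsc f k ≤ nthBidDesc b k) : k ≤ mcafeeK V M b f :=
  le_sup (f := id) (mem_filter.mpr ⟨mem_Icc.mpr ⟨hk, hkm⟩, h⟩)

theorem nthAskAsc_mcafeeK_le_nthBidDesc (hK : 1 ≤ mcafeeK V M b f) :
    nthAskAsc f (mcafeeK V M b f) ≤ nthBidDesc b (mcafeeK V M b f) := by
  have hne : ((Icc 1 (min V M)).filter fun k => nthAskAsc f k ≤ nthBidDesc b k).Nonempty := by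
    rw [nonempty_iff_ne_empty]
    rintro hempty
    simp [mcafeeK, hempty] at hK
  obtain ⟨k, hk, hsup⟩ := exists_mem_eq_sup _ hne id
  rw [mcafeeK, hsup]
  exact (mem_filter.mp hk).2

theorem nthBidDesc_lt_nthAskAsc_of_mcafeeK_lt {k : ℕ} (hK : mcafeeK V M b f < k)
    (hkm : k ≤ min V M) : nthBidDesc b k < nthAskAsc f k :=
  lt_of_not_ge fun h => (le_mcafeeK b f (by omega) hkm h).not_gt hK

theorem mcafeeQ_le_mcafeeK : mcafeeQ V M b f ≤ mcafeeK V M b f := by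
  unfold mcafeeQ
  split_ifs <;> omega

theorem nthAskAsc_mcafeeK_le_sellerPrice :
    nthAskAsc f (mcafeeK V M b f) ≤ mcafeeSellerPrice V M b f := by
  unfold mcafeeSellerPrice
  split_ifs with hth
  · exact hth.2.2.1
  · exact le_rfl

theorem sellerPrice_le_nthBidDesc_mcafeeK (hK : 1 ≤ mcafeeK V M b f) :
    mcafeeSellerPrice V M b f ≤ nthBidDesc b (mcafeeK V M b f) := by
  unfold mcafeeSellerPrice
  split_ifs with hth
  · exact hth.2.2.2
  · exact nthAskAsc_mcafeeK_le_nthBidDesc b f hK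

theorem sellerRank_le_mcafeeK_of_sellerTrades {j : Fin M} (hT : sellerTrades V M b f j) :
    sellerRank f j ≤ mcafeeK V M b f :=
  hT.trans (mcafeeQ_le_mcafeeK b f)

theorem one_le_mcafeeK_of_sellerTrades {j : Fin M} (hT : sellerTrades V M b f j) :
    1 ≤ mcafeeK V M b f :=
  (one_le_sellerRank f j).trans (sellerRank_le_mcafeeK_of_sellerTrades b f hT)

theorem le_sellerPrice_of_sellerTrades {j : Fin M} (hT : sellerTrades V M b f j) :
    f j ≤ mcafeeSellerPrice V M b f :=
  calc f j = nthAskAsc f (sellerRank f j) := (nthAskAsc_sellerRank f j).symm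
    _ ≤ nthAskAsc f (mcafeeK V M b f) :=
      nthAskAsc_le_nthAskAsc f (one_le_sellerRank f j)
        (sellerRank_le_mcafeeK_of_sellerTrades b f hT)
        ((mcafeeK_le_min b f).trans (min_le_right V M))
    _ ≤ mcafeeSellerPrice V M b f := nthAskAsc_mcafeeK_le_sellerPrice b f

theorem sellerUtility_self_nonneg (j : Fin M) : 0 ≤ sellerUtility V M b f j (f j) := by
  unfold sellerUtility
  split_ifs with hT
  · exact sub_nonneg.mpr (le_sellerPrice_of_sellerTrades b f hT)
  · exact le_rfl

end Mechanism

section Deviation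

variable {V M : ℕ} (b : Fin V → ℝ) (a : Fin M → ℝ) (j : Fin M)

theorem nthAskAsc_update_mcafeeK_le_sellerPrice {x : ℝ} (y : ℝ)
    (hT : sellerTrades V M b (Function.update a j x) j)
    (hy : y ≤ mcafeeSellerPrice V M b (Function.update a j x)) :
    nthAskAsc (Function.update a j y) (mcafeeK V M b (Function.update a j x))
      ≤ mcafeeSellerPrice V M b (Function.update a j x) :=
  (nthAskAsc_update_le_max a j x y (one_le_mcafeeK_of_sellerTrades b _ hT)
    ((mcafeeK_le_min b _).trans (min_le_right V M))).trans
    (max_le (nthAskAsc_mcafeeK_le_sellerPrice b _) hy)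

theorem mcafeeK_update_eq {x : ℝ} (y : ℝ) (hT : sellerTrades V M b (Function.update a j x) j)
    (hy : y ≤ mcafeeSellerPrice V M b (Function.update a j x)) :
    mcafeeK V M b (Function.update a j y) = mcafeeK V M b (Function.update a j x) := by
  have hK := one_le_mcafeeK_of_sellerTrades b _ hT
  have hr := sellerRank_le_mcafeeK_of_sellerTrades b _ hT
  refine le_antisymm (le_of_not_gt fun hlt => ?_) (le_mcafeeK b _ hK (mcafeeK_le_min b _)
    ((nthAskAsc_update_mcafeeK_le_sellerPrice b a j y hT hy).trans
      (sellerPrice_le_nthBidDesc_mcafeeK b _ hK)))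
  have hm := mcafeeK_le_min b (Function.update a j y)
  have hg := nthAskAsc_mcafeeK_le_nthBidDesc b _ (hK.trans hlt.le)
  have hf := nthBidDesc_lt_nthAskAsc_of_mcafeeK_lt b _ hlt hm
  have hfg := nthAskAsc_update_le_of_sellerRank_lt a j x y (hr.trans_lt hlt)
    (hm.trans (min_le_right V M))
  linarith

theorem mcafeeP0_update_eq {x : ℝ} (y : ℝ) (hT : sellerTrades V M b (Function.update a j x) j)
    (hy : y ≤ mcafeeSellerPrice V M b (Function.update a j x))
    (hr : sellerRank (Function.update a j y) j ≤ mcafeeK V M b (Function.update a j x)) :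
    mcafeeP0 V M b (Function.update a j y) = mcafeeP0 V M b (Function.update a j x) := by
  have hrx := sellerRank_le_mcafeeK_of_sellerTrades b _ hT
  rw [mcafeeP0, mcafeeP0, mcafeeK_update_eq b a j y hT hy,
    nthAskAsc_update_eq a j y x (Nat.lt_succ_of_le hr) (Nat.lt_succ_of_le hrx)]

theorem sellerTrades_update_of_lt_of_threshold {x : ℝ} (y : ℝ)
    (hT : sellerTrades V M b (Function.update a j x) j)
    (hth : mcafeeThreshold V M b (Function.update a j x))
    (hy : y < mcafeeSellerPrice V M b (Function.update a j x)) :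
    sellerTrades V M b (Function.update a j y) j ∧
      mcafeeSellerPrice V M b (Function.update a j y)
        = mcafeeSellerPrice V M b (Function.update a j x) := by
  set f := Function.update a j x
  set K := mcafeeK V M b f
  have hKy := mcafeeK_update_eq b a j y hT hy.le
  have hprice : mcafeeSellerPrice V M b f = mcafeeP0 V M b f := if_pos hth
  have hm : K + 1 ≤ min V M := hth.2.1
  -- `p₀` is the midpoint of `b_{K+1} < a_{K+1}`
  have hp0 : mcafeeP0 V M b f < nthAskAsc f (K + 1) := by
    have := nthBidDesc_lt_nthAskAsc_of_mcafeeK_lt b f (Nat.lt_succ_self K) hm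
    rw [mcafeeP0]
    linarith
  have hrg : sellerRank (Function.update a j y) j ≤ K :=
    Nat.le_of_lt_succ <| sellerRank_update_lt_of_lt_nthAskAsc a j x y
      (Nat.lt_succ_of_le (sellerRank_le_mcafeeK_of_sellerTrades b f hT))
      (hm.trans (min_le_right V M)) (by linarith)
  have hp0y := mcafeeP0_update_eq b a j y hT hy.le hrg
  have hthy : mcafeeThreshold V M b (Function.update a j y) := by
    refine ⟨hKy ▸ hth.1, hKy ▸ hth.2.1, ?_, ?_⟩
    · rw [hKy, hp0y, ← hprice]
      exact nthAskAsc_update_mcafeeK_le_sellerPrice b a j y hT hy.le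
    · rw [hKy, hp0y]
      exact hth.2.2.2
  refine ⟨?_, ?_⟩
  · change _ ≤ mcafeeQ V M b _
    rwa [mcafeeQ, if_pos hthy, hKy]
  · rw [mcafeeSellerPrice, if_pos hthy, hp0y, hprice]

theorem sellerTrades_update_of_lt_of_not_threshold {x : ℝ} (y : ℝ)
    (hT : sellerTrades V M b (Function.update a j x) j)
    (hth : ¬ mcafeeThreshold V M b (Function.update a j x))
    (hy : y < mcafeeSellerPrice V M b (Function.update a j x)) :
    sellerTrades V M b (Function.update a j y) j ∧
      mcafeeSellerPrice V M b (Function.update a j y)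
        = mcafeeSellerPrice V M b (Function.update a j x) := by
  set f := Function.update a j x
  set K := mcafeeK V M b f
  have hKy : mcafeeK V M b (Function.update a j y) = K := mcafeeK_update_eq b a j y hT hy.le
  have hprice : mcafeeSellerPrice V M b f = nthAskAsc f K := if_neg hth
  have hrf : sellerRank f j < K := by
    have : sellerRank f j ≤ K - 1 := hT.trans_eq (if_neg hth)
    have := one_le_mcafeeK_of_sellerTrades b f hT
    omega
  have hrg : sellerRank (Function.update a j y) j < K :=
    sellerRank_update_lt_of_lt_nthAskAsc a j x y hrf
      ((mcafeeK_le_min b f).trans (min_le_right V M)) (hprice ▸ hy)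
  have hA : nthAskAsc (Function.update a j y) K = nthAskAsc f K :=
    nthAskAsc_update_eq a j y x hrg hrf
  have hp0y : mcafeeP0 V M b (Function.update a j y) = mcafeeP0 V M b f :=
    mcafeeP0_update_eq b a j y hT hy.le hrg.le
  have hthy : ¬ mcafeeThreshold V M b (Function.update a j y) := by
    simpa only [mcafeeThreshold, hKy, hA, hp0y] using hth
  refine ⟨?_, ?_⟩
  · change _ ≤ mcafeeQ V M b _
    rw [mcafeeQ, if_neg hthy, hKy]
    omega
  · rw [mcafeeSellerPrice, if_neg hthy, hKy, hA, hprice]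

theorem sellerTrades_update_of_lt_sellerPrice {x : ℝ} (y : ℝ) (hT : sellerTrades V M b (Function.update a j x) j)
    (hy : y < mcafeeSellerPrice V M b (Function.update a j x)) :
    sellerTrades V M b (Function.update a j y) j ∧
      mcafeeSellerPrice V M b (Function.update a j y)
        = mcafeeSellerPrice V M b (Function.update a j x) :=
  if hth : mcafeeThreshold V M b (Function.update a j x) then
    sellerTrades_update_of_lt_of_threshold b a j y hT hth hy
  else sellerTrades_update_of_lt_of_not_threshold b a j y hT hth hy

end Deviation

/-- McAfee's double auction is dominant-strategy truthful for
sellers: for every seller `j` with true cost `c`, every fixed profile of all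
buyers' bids `b` and the other sellers' asks (encoded in `a`), and every
alternative ask `a'`, the seller's utility when she reports her true cost `c`
is at least her utility when she reports `a'`. -/
theorem stmt_13 (V M : ℕ) (b : Fin V → ℝ) (a : Fin M → ℝ) (j : Fin M)
    (c a' : ℝ) :
    sellerUtility V M b (Function.update a j a') j c ≤
      sellerUtility V M b (Function.update a j c) j c := by
  have htruthful : 0 ≤ sellerUtility V M b (Function.update a j c) j c := by
    simpa using sellerUtility_self_nonneg b (Function.update a j c) j
  by_cases hT : sellerTrades V M b (Function.update a j a') j
  · by_cases hc : c < mcafeeSellerPrice V M b (Function.update a j a')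
    · obtain ⟨hTc, hprice⟩ := sellerTrades_update_of_lt_sellerPrice b a j c hT hc
      rw [sellerUtility, sellerUtility, if_pos hT, if_pos hTc, hprice]
    · calc sellerUtility V M b (Function.update a j a') j c
          = mcafeeSellerPrice V M b (Function.update a j a') - c := if_pos hT
        _ ≤ 0 := by linarith
        _ ≤ _ := htruthful
  · calc sellerUtility V M b (Function.update a j a') j c = 0 := if_neg hT
      _ ≤ _ := htruthful
end

section
/- The price paid by a trading buyer in McAfee's double auction does not depend on her own bid: if buyer k trades in the threshold-price case (k ≤ K, price p₀ = (b_{K+1}+a_{K+1})/2) or in the trade-reduction case (k ≤ K−1, price b_K), then the price she pays is determined entirely by the other participants' sorted bids and asks; formally, replacing b_k by any value b′ with b_{k−1} ≥ b′ ≥ b_k (preserving the sorted order and keeping buyer k among the traders) leaves the breakeven index K and the price charged to buyer k unchanged. -/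
open Finset

/-- The breakeven index of a (sorted) double-auction profile: the largest
`k ∈ {1, …, min V M}` with `b k ≥ a k` (and `0` if there is none). -/
noncomputable def breakevenIdx (V M : ℕ) (b a : ℕ → ℝ) : ℕ :=
  ((Finset.Icc 1 (min V M)).filter (fun k => a k ≤ b k)).sup id

/-- The price paid by a trading buyer in McAfee's double auction
does not depend on her own bid. If buyer `k` trades (in the threshold-price
case `k ≤ K` paying `p₀ = (b (K+1) + a (K+1))/2`, in the trade-reduction case
`k ≤ K − 1` paying `b K`), then replacing her bid `b k` by any `v` with
`b (k−1) ≥ v ≥ b k` (preserving sortedness and keeping her among the traders)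
leaves the breakeven index `K` and the price she is charged unchanged. -/
theorem stmt_14 (V M K : ℕ) (b a : ℕ → ℝ)
    (hb : AntitoneOn b (Set.Icc 1 V)) (ha : MonotoneOn a (Set.Icc 1 M))
    (hK1 : 1 ≤ K) (hKV : K < V) (hKM : K < M)
    (hbe : a K ≤ b K)
    (hK : K = breakevenIdx V M b a)
    (p₀ : ℝ) (hp₀ : p₀ = (b (K + 1) + a (K + 1)) / 2)
    (k : ℕ) (hk1 : 1 ≤ k) (hkV : k ≤ V)
    (htrader : (a K ≤ p₀ ∧ p₀ ≤ b K → k ≤ K) ∧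
               (¬(a K ≤ p₀ ∧ p₀ ≤ b K) → k ≤ K - 1))
    (v : ℝ) (hv_hi : 2 ≤ k → v ≤ b (k - 1)) (hv_lo : b k ≤ v) :
    breakevenIdx V M (Function.update b k v) a = K ∧
    AntitoneOn (Function.update b k v) (Set.Icc 1 V) ∧
    ((a K ≤ p₀ ∧ p₀ ≤ b K) →
      ((Function.update b k v) (K + 1) + a (K + 1)) / 2 = p₀) ∧
    (¬(a K ≤ p₀ ∧ p₀ ≤ b K) →
      (Function.update b k v) K = b K) := by
  have hkK : k ≤ K := by
    by_cases hcase : a K ≤ p₀ ∧ p₀ ≤ b K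
    · exact htrader.1 hcase
    · exact le_trans (htrader.2 hcase) (Nat.sub_le K 1)
  have hKmin : K ≤ min V M := le_min hKV.le hKM.le
  have hKmem : K ∈ Finset.Icc 1 (min V M) := Finset.mem_Icc.mpr ⟨hK1, hKmin⟩
  -- breakeven index unchanged
  have hidx : breakevenIdx V M (Function.update b k v) a = K := by
    unfold breakevenIdx
    apply le_antisymm
    · apply Finset.sup_le
      intro j hj
      rcases Finset.mem_filter.mp hj with ⟨hj1, hj2⟩
      by_cases hjk : j = k
      · simpa [hjk] using hkK
      · have : j ∈ (Finset.Icc 1 (min V M)).filter (fun k => a k ≤ b k) := by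
          refine Finset.mem_filter.mpr ⟨hj1, ?_⟩
          simpa [Function.update_of_ne hjk] using hj2
        have h := Finset.le_sup (f := id) this
        rw [hK]; unfold breakevenIdx; exact h
    · have hKnew : K ∈ (Finset.Icc 1 (min V M)).filter
          (fun j => a j ≤ Function.update b k v j) := by
        refine Finset.mem_filter.mpr ⟨hKmem, ?_⟩
        by_cases hKk : K = k
        · rw [hKk, Function.update_self]
          exact le_trans (hKk ▸ hbe) hv_lo
        · rw [Function.update_of_ne hKk]
          exact hbe
      simpa using Finset.le_sup (f := id) hKnew
  refine ⟨hidx, ?_, ?_, ?_⟩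
  · -- antitone
    intro i hi j hj hij
    rcases hi with ⟨hi1, hiV⟩
    rcases hj with ⟨hj1, hjV⟩
    by_cases hik : i = k <;> by_cases hjk : j = k
    · rw [hik, hjk]
    · -- i = k, j ≠ k, so k < j
      rw [hik, Function.update_self, Function.update_of_ne hjk]
      exact le_trans (hb ⟨hi1, hiV⟩ ⟨hj1, hjV⟩ (hik ▸ hij)) (hik ▸ hv_lo)
    · -- j = k, i ≠ k, so i < k, hence k ≥ 2
      rw [hjk, Function.update_self, Function.update_of_ne hik]
      have hik' : i < k := lt_of_le_of_ne (hjk ▸ hij) hik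
      have hk2 : 2 ≤ k := by omega
      have h1 : v ≤ b (k - 1) := hv_hi hk2
      have h2 : b (k - 1) ≤ b i :=
        hb ⟨hi1, hiV⟩ ⟨by omega, by omega⟩ (by omega)
      exact le_trans h1 h2
    · rw [Function.update_of_ne hik, Function.update_of_ne hjk]
      exact hb ⟨hi1, hiV⟩ ⟨hj1, hjV⟩ hij
  · intro _
    have : K + 1 ≠ k := by omega
    rw [Function.update_of_ne this, hp₀]
  · intro hcase
    have hkK' : k ≤ K - 1 := htrader.2 hcase
    have : K ≠ k := by omega
    rw [Function.update_of_ne this]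
end

section
/- A buyer excluded under truthful bidding who deviates to win cannot profit in the threshold-price case: if buyer K+1 (with truthful value b_{K+1} < a_{K+1}) raises her bid so as to be among the traders, then any price she could pay in the resulting McAfee outcome is at least min(p₀, a_{K+1}) > b_{K+1}; in particular, in the original threshold-price outcome her value b_{K+1} is strictly below the market price p₀, so winning at any price weakly above p₀ yields strictly negative utility. -/
open Classical Finset

/-!
Raising the bid of the buyer ranked `K + 1` cannot lower the `K` highest bids and moves the
`k`-th highest bid past an ask only if the `(k-1)`-st one already was, so the breakeven index
`K'` of the deviated profile is `K` or `K + 1`. If `K' = K + 1`, every McAfee price is at least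
`a_{K+1}`. If `K' = K` and the deviation ends in trade reduction, the price is `b'_K ≥ b_K ≥ p₀`;
in the threshold case the deviator trades only with a bid at least `b'_K ≥ b_K`, so the
`(K+1)`-st bid does not fall and the new price `p₀'` is at least `p₀`.
-/

namespace McAfee

section OrderStatistics

variable {n : ℕ}

lemma le_nthBidDesc_iff (b : Fin n → ℝ) {k : ℕ} (hk : k - 1 < n) (t : ℝ) :
    t ≤ nthBidDesc b k ↔ k - 1 < Fintype.card {i // t ≤ b i} := by
  have hanti : Antitone (b ∘ Tuple.sort (fun i => -b i)) := fun x y hxy => by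
    simpa using Tuple.monotone_sort (fun i => -b i) hxy
  have hcard : Fintype.card {i // t ≤ (b ∘ Tuple.sort (fun i => -b i)) i}
      = Fintype.card {i // t ≤ b i} :=
    Fintype.card_congr ((Tuple.sort (fun i => -b i)).subtypeEquiv fun _ => Iff.rfl)
  rw [nthBidDesc, dif_pos hk, ← hcard, Fintype.card_subtype]
  exact (Tuple.lt_card_ge_iff_apply_ge_of_antitone (j := ⟨k - 1, hk⟩) hanti).symm

lemma nthBidDesc_lt_iff (b : Fin n → ℝ) {k : ℕ} (hk : k - 1 < n) (t : ℝ) :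
    nthBidDesc b k < t ↔ Fintype.card {i // t ≤ b i} ≤ k - 1 := by
  rw [← not_le, le_nthBidDesc_iff b hk, not_lt]

lemma nthBidDesc_anti (b : Fin n → ℝ) {k l : ℕ} (hkl : k ≤ l) (hl : l - 1 < n) :
    nthBidDesc b l ≤ nthBidDesc b k := by
  have hk : k - 1 < n := lt_of_le_of_lt (Nat.sub_le_sub_right hkl 1) hl
  rw [nthBidDesc, nthBidDesc, dif_pos hl, dif_pos hk]
  simpa using Tuple.monotone_sort (fun i => -b i)
    (a := ⟨k - 1, hk⟩) (b := ⟨l - 1, hl⟩) (Nat.sub_le_sub_right hkl 1)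

lemma nthAskAsc_mono (a : Fin n → ℝ) {k l : ℕ} (hkl : k ≤ l) (hl : l - 1 < n) :
    nthAskAsc a k ≤ nthAskAsc a l := by
  have hk : k - 1 < n := lt_of_le_of_lt (Nat.sub_le_sub_right hkl 1) hl
  rw [nthAskAsc, nthAskAsc, dif_pos hl, dif_pos hk]
  exact Tuple.monotone_sort a (a := ⟨k - 1, hk⟩) (b := ⟨l - 1, hl⟩) (Nat.sub_le_sub_right hkl 1)

lemma nthBidDesc_buyerRank (b : Fin n → ℝ) (i : Fin n) :
    nthBidDesc b (buyerRank b i) = b i := by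
  have h : ((Tuple.sort fun j => -b j).symm i : ℕ) + 1 - 1 < n := by simp
  rw [nthBidDesc, buyerRank, dif_pos h]
  simp

lemma nthBidDesc_le_of_buyerRank_le (b : Fin n → ℝ) (i : Fin n) {k : ℕ}
    (hi : buyerRank b i ≤ k) (hk : k - 1 < n) : nthBidDesc b k ≤ b i :=
  nthBidDesc_buyerRank b i ▸ nthBidDesc_anti b hi hk

lemma nthBidDesc_le_nthBidDesc (b b' : Fin n → ℝ) {k : ℕ} (hk : k - 1 < n)
    (h : ∀ j, nthBidDesc b k ≤ b j → nthBidDesc b k ≤ b' j) :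
    nthBidDesc b k ≤ nthBidDesc b' k := by
  rw [le_nthBidDesc_iff b' hk]
  exact ((le_nthBidDesc_iff b hk _).1 le_rfl).trans_le (Fintype.card_subtype_mono _ _ h)

lemma nthBidDesc_mono {b b' : Fin n → ℝ} (h : b ≤ b') (k : ℕ) :
    nthBidDesc b k ≤ nthBidDesc b' k := by
  by_cases hk : k - 1 < n
  · exact nthBidDesc_le_nthBidDesc b b' hk fun j hj => hj.trans (h j)
  · simp [nthBidDesc, hk]

lemma nthBidDesc_le_nthBidDesc_update (b : Fin n → ℝ) (i : Fin n) (v : ℝ) {k : ℕ}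
    (hk : k - 1 < n) (hi : b i < nthBidDesc b k) :
    nthBidDesc b k ≤ nthBidDesc (Function.update b i v) k := by
  refine nthBidDesc_le_nthBidDesc _ _ hk fun j hj => ?_
  rcases eq_or_ne j i with rfl | hne
  · exact absurd hj hi.not_ge
  · rwa [Function.update_of_ne hne]

lemma card_le_update_le_card_add_one (b : Fin n → ℝ) (i : Fin n) (v t : ℝ) :
    Fintype.card {j // t ≤ Function.update b i v j} ≤ Fintype.card {j // t ≤ b j} + 1 := by
  simp only [Fintype.card_subtype]
  refine (card_le_card fun j hj => ?_).trans (card_insert_le i _)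
  rcases eq_or_ne j i with rfl | hne
  · exact mem_insert_self _ _
  · simp_all

/-- Changing one bid moves each order statistic by at most one rank. -/
lemma nthBidDesc_update_succ_lt (b : Fin n → ℝ) (i : Fin n) (v : ℝ) {k : ℕ} {t : ℝ}
    (hk1 : 1 ≤ k) (hk : k < n) (h : nthBidDesc b k < t) :
    nthBidDesc (Function.update b i v) (k + 1) < t := by
  rw [nthBidDesc_lt_iff _ (by omega)] at h ⊢
  have := card_le_update_le_card_add_one b i v t
  omega

end OrderStatistics

section BreakevenIndex

variable {V M : ℕ} (b : Fin V → ℝ) (a : Fin M → ℝ)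

lemma mcafeeK_le_min : mcafeeK V M b a ≤ min V M :=
  Finset.sup_le fun _ hk => (mem_Icc.1 (mem_filter.1 hk).1).2

lemma le_mcafeeK {k : ℕ} (hk1 : 1 ≤ k) (hk : k ≤ min V M)
    (h : nthAskAsc a k ≤ nthBidDesc b k) : k ≤ mcafeeK V M b a :=
  Finset.le_sup (f := id) (mem_filter.2 ⟨mem_Icc.2 ⟨hk1, hk⟩, h⟩)

lemma nthBidDesc_lt_nthAskAsc_of_mcafeeK_lt {k : ℕ} (hK : mcafeeK V M b a < k)
    (hk : k ≤ min V M) : nthBidDesc b k < nthAskAsc a k := by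
  by_contra! h
  exact hK.not_ge (le_mcafeeK b a (by omega) hk h)

lemma nthAskAsc_mcafeeK_le (hK : 1 ≤ mcafeeK V M b a) :
    nthAskAsc a (mcafeeK V M b a) ≤ nthBidDesc b (mcafeeK V M b a) := by
  have hne : ((Icc 1 (min V M)).filter fun k => nthAskAsc a k ≤ nthBidDesc b k).Nonempty := by
    by_contra! hempty
    simp [mcafeeK, hempty] at hK
  obtain ⟨k, hk, hKk⟩ := exists_mem_eq_sup _ hne id
  rw [mcafeeK, hKk]
  exact (mem_filter.1 hk).2

lemma nthAskAsc_mcafeeK_le_mcafeeBuyerPrice (hK : 1 ≤ mcafeeK V M b a) :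
    nthAskAsc a (mcafeeK V M b a) ≤ mcafeeBuyerPrice V M b a := by
  unfold mcafeeBuyerPrice
  split_ifs with hth
  · exact hth.2.2.1
  · exact nthAskAsc_mcafeeK_le b a hK

lemma mcafeeK_update_le_succ (i : Fin V) (v : ℝ) :
    mcafeeK V M (Function.update b i v) a ≤ mcafeeK V M b a + 1 := by
  refine Finset.sup_le fun k hk => ?_
  obtain ⟨hk, hle⟩ := mem_filter.1 hk
  obtain ⟨hk1, hkmin⟩ := mem_Icc.1 hk
  by_contra! hlt
  simp only [id] at hlt
  have hV : k ≤ V := hkmin.trans (min_le_left _ _)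
  have hM : k ≤ M := hkmin.trans (min_le_right _ _)
  have hprev : nthBidDesc b (k - 1) < nthAskAsc a k :=
    (nthBidDesc_lt_nthAskAsc_of_mcafeeK_lt b a (by omega) (by omega)).trans_le
      (nthAskAsc_mono a (Nat.sub_le k 1) (by omega))
  have hnext := nthBidDesc_update_succ_lt b i v (by omega) (by omega) hprev
  rw [Nat.sub_add_cancel (by omega)] at hnext
  exact hle.not_gt hnext

lemma mcafeeK_le_mcafeeK_update (i : Fin V) (v : ℝ) (hK : 1 ≤ mcafeeK V M b a)
    (hi : b i < nthBidDesc b (mcafeeK V M b a)) :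
    mcafeeK V M b a ≤ mcafeeK V M (Function.update b i v) a := by
  have hmin := mcafeeK_le_min b a
  refine le_mcafeeK _ a hK hmin ((nthAskAsc_mcafeeK_le b a hK).trans ?_)
  exact nthBidDesc_le_nthBidDesc_update b i v (by omega) hi

end BreakevenIndex

end McAfee

open McAfee in
/-- A buyer excluded under truthful bidding (her truthful bid is
the `(K+1)`-st highest, so her value is `b_{K+1} < a_{K+1}`) who deviates so
as to be among the traders cannot profit in the threshold-price case: any
price she could pay in the McAfee outcome resulting from her deviation is at
least `min(p₀, a_{K+1}) > b_{K+1}`; in particular her value `b_{K+1}` is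
strictly below the original market price `p₀`, so winning at any price weakly
above `p₀` yields strictly negative utility. -/
theorem stmt_15 (V M : ℕ) (b : Fin V → ℝ) (a : Fin M → ℝ) (i : Fin V)
    (K : ℕ) (hK : K = mcafeeK V M b a)
    (hK1 : 1 ≤ K) (hKlt : K + 1 ≤ min V M)
    (hrank : buyerRank b i = K + 1)
    (hlt : nthBidDesc b (K + 1) < nthAskAsc a (K + 1))
    (p₀ : ℝ) (hp₀ : p₀ = (nthBidDesc b (K + 1) + nthAskAsc a (K + 1)) / 2)
    (hth : nthAskAsc a K ≤ p₀ ∧ p₀ ≤ nthBidDesc b K) :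
    (∀ v : ℝ, buyerTrades V M (Function.update b i v) a i →
        min p₀ (nthAskAsc a (K + 1)) ≤
          mcafeeBuyerPrice V M (Function.update b i v) a) ∧
    nthBidDesc b (K + 1) < min p₀ (nthAskAsc a (K + 1)) ∧
    nthBidDesc b (K + 1) < p₀ ∧
    (∀ p : ℝ, p₀ ≤ p → nthBidDesc b (K + 1) - p < 0) := by
  have hp₀lt : nthBidDesc b (K + 1) < p₀ := by rw [hp₀]; linarith
  refine ⟨fun v htrade => ?_, lt_min hp₀lt hlt, hp₀lt, fun p hp => by linarith⟩
  set b' := Function.update b i v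
  have hKV : K + 1 ≤ V := hKlt.trans (min_le_left _ _)
  have hbi : b i = nthBidDesc b (K + 1) := by rw [← hrank, nthBidDesc_buyerRank]
  have hiK : b i < nthBidDesc b K := hbi ▸ hp₀lt.trans_le hth.2
  have hbK : nthBidDesc b K ≤ nthBidDesc b' K :=
    nthBidDesc_le_nthBidDesc_update b i v (by omega) hiK
  have hK'ge : K ≤ mcafeeK V M b' a :=
    hK ▸ mcafeeK_le_mcafeeK_update b a i v (hK ▸ hK1) (hK ▸ hiK)
  have hK'le : mcafeeK V M b' a ≤ K + 1 := hK ▸ mcafeeK_update_le_succ b a i v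
  obtain hK' | hK' : mcafeeK V M b' a = K + 1 ∨ mcafeeK V M b' a = K := by omega
  · exact (min_le_right _ _).trans
      (hK' ▸ nthAskAsc_mcafeeK_le_mcafeeBuyerPrice b' a (by omega))
  by_cases hth' : mcafeeThreshold V M b' a
  · -- the deviator trades among the top `K`, so her new bid is at least `b'_K ≥ b_K > b i`
    have hrank' : buyerRank b' i ≤ K := by
      simpa only [buyerTrades, mcafeeQ, if_pos hth', hK'] using htrade
    have hv : b i ≤ v := by
      have := nthBidDesc_le_of_buyerRank_le b' i hrank' (by omega)
      simp only [b', Function.update_self] at this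
      linarith
    have hbK1 : nthBidDesc b (K + 1) ≤ nthBidDesc b' (K + 1) :=
      nthBidDesc_mono (le_update_self_iff.2 hv) _
    rw [mcafeeBuyerPrice, if_pos hth', mcafeeP0, hK']
    exact (min_le_left _ _).trans (by rw [hp₀]; linarith)
  · rw [mcafeeBuyerPrice, if_neg hth', hK']
    exact (min_le_left _ _).trans (hth.2.trans hbK)
end
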